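/- Let t ∈ ℂ \ {0} and fix a square root √t of t. Define σ_t(s) = (t + s/√t, 1/t + s·√t) for s ∈ ℂ. Then each point σ_t(s) satisfies the tangent line equation t³ - t²x + ty - 1 = 0, and f(σ_t(s)) = σ_{1/t²}(s² - 2), where f(x,y) = (y² - 2x, x² - 2y). -/
import Mathlib

def f (p : ℂ × ℂ) : ℂ × ℂ := (p.2^2 - 2*p.1, p.1^2 - 2*p.2)

/-- σ_t(s) parametrizes the tangent line with parameter t, using a chosen
square root r of t.  Then each σ_t(s) lies on the tangent line, and
f(σ_t(s)) = σ_{1/t²}(s² - 2), where the square root of 1/t² used is 1/t. -/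
theorem tangent_line_dynamics (t r : ℂ) (ht : t ≠ 0) (hr : r^2 = t) :
    (∀ s : ℂ,
      t^3 - t^2*(t + s/r) + t*(1/t + s*r) - 1 = 0) ∧
    (∀ s : ℂ,
      f (t + s/r, 1/t + s*r) =
        (1/t^2 + (s^2 - 2)/(1/t), t^2 + (s^2 - 2)*(1/t))) := by
  have hr0 : r ≠ 0 := by rintro rfl; simp at hr; exact ht hr.symm
  subst hr
  refine ⟨fun s => ?_, fun s => ?_⟩
  · field_simp
    ring
  · simp only [f, Prod.mk.injEq]
    constructor <;> field_simp <;> ring
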